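/- arXiv:2510.03763 — 3 statements merged into one kernel-verified Lean document; each statement's English description precedes it below -/
import Mathlib

section
/- Let E be a finite-dimensional real inner product space, let ρ > 0, and let L : E → ℝ be twice continuously differentiable. Fix a point w ∈ E with gradient L w ≠ 0, and let H_w := fderiv ℝ (gradient L) w denote the Hessian of L at w, assumed positive semidefinite (⟪H_w v, v⟫ ≥ 0 for all v ∈ E). Then the gradient at w of the function u ↦ ρ * ‖gradient L u‖ has norm at most ρ times the trace of H_w; equivalently, since the Hessian of a C² function is self-adjoint and positive semidefinite, the norm of the gradient of the penalty term ρ‖∇L(w)‖ is at most ρ times the sum of the eigenvalues of the Hessian. -/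
/-!
The Hessian `H` of a `C²` function is symmetric, so under the hypothesis it is a positive
operator. By the chain rule through the `1`-Lipschitz norm, the derivative of `u ↦ ‖∇L u‖` at `w`
has norm at most `‖H‖`. For a positive operator, `‖H‖` is the supremum of `⟪H u, u⟫` over unit
vectors `u`, and each such value is a nonnegative diagonal term of the trace of `H` in an
orthonormal basis containing `u`, hence at most `trace H`.
-/

open RealInnerProductSpace

namespace LinearMap

variable {𝕜 E : Type*} [RCLike 𝕜] [NormedAddCommGroup E] [InnerProductSpace 𝕜 E]
  [FiniteDimensional 𝕜 E]

open RCLike in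
lemma IsPositive.re_inner_apply_self_le_re_trace {T : E →ₗ[𝕜] E} (hT : T.IsPositive) {u : E}
    (hu : ‖u‖ = 1) : re (inner 𝕜 (T u) u) ≤ re (T.trace 𝕜 E) := by
  have hons : Orthonormal 𝕜 ((↑) : ({u} : Set E) → E) := by
    classical
    rw [orthonormal_subtype_iff_ite]
    rintro v rfl w rfl
    simp [inner_self_eq_norm_sq_to_K, hu]
  obtain ⟨s, b, hus, hb⟩ := hons.exists_orthonormalBasis_extension
  have hu_mem : u ∈ s := hus rfl
  rw [trace_eq_sum_inner T b, map_sum]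
  calc re (inner 𝕜 (T u) u) = re (inner 𝕜 (b ⟨u, hu_mem⟩) (T (b ⟨u, hu_mem⟩))) := by
        rw [hb, ← hT.isSymmetric]
    _ ≤ ∑ i, re (inner 𝕜 (b i) (T (b i))) :=
        Finset.single_le_sum (fun i _ => hT.re_inner_nonneg_right (b i)) (Finset.mem_univ _)

end LinearMap

namespace ContinuousLinearMap

variable {𝕜 E : Type*} [RCLike 𝕜] [NormedAddCommGroup E] [InnerProductSpace 𝕜 E]
  [FiniteDimensional 𝕜 E]

open RCLike in
lemma IsPositive.norm_le_re_trace {T : E →L[𝕜] E} (hT : T.IsPositive) :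
    ‖T‖ ≤ re ((T : E →ₗ[𝕜] E).trace 𝕜 E) := by
  rw [T.norm_eq_iSup_rayleighQuotient hT.isSymmetric]
  refine ciSup_le fun x => ?_
  rcases eq_or_ne x 0 with rfl | hx
  · simpa using (RCLike.nonneg_iff.mp hT.toLinearMap.trace_nonneg).1
  · have hunit : ‖(‖x‖⁻¹ : 𝕜) • x‖ = 1 := by
      rw [norm_smul, norm_inv, norm_algebraMap', norm_norm,
        inv_mul_cancel₀ (norm_ne_zero_iff.2 hx)]
    rw [← T.rayleigh_smul x (c := (‖x‖⁻¹ : 𝕜)) (by simpa using hx), rayleighQuotient, hunit,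
      one_pow, div_one, reApplyInnerSelf_apply, abs_of_nonneg (hT.re_inner_nonneg_left _)]
    exact hT.toLinearMap.re_inner_apply_self_le_re_trace hunit

end ContinuousLinearMap

lemma norm_gradient_const_mul {𝕜 E : Type*} [RCLike 𝕜] [NormedAddCommGroup E]
    [InnerProductSpace 𝕜 E] [CompleteSpace E] (c : 𝕜) (f : E → 𝕜) (x : E) :
    ‖gradient (fun u => c * f u) x‖ = ‖c‖ * ‖fderiv 𝕜 f x‖ := by
  rw [gradient, LinearIsometryEquiv.norm_map, show (fun u => c * f u) = c • f from rfl,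
    fderiv_const_smul_field, Pi.smul_apply, norm_smul]

lemma norm_fderiv_norm_comp_le {E F : Type*} [NormedAddCommGroup E] [NormedSpace ℝ E]
    [NormedAddCommGroup F] [InnerProductSpace ℝ F] {f : E → F} {x : E}
    (hf : DifferentiableAt ℝ f x) : ‖fderiv ℝ (fun u => ‖f u‖) x‖ ≤ ‖fderiv ℝ f x‖ := by
  rcases eq_or_ne (f x) 0 with h0 | h0
  · have hmin : IsLocalMin (fun u => ‖f u‖) x :=
      Filter.Eventually.of_forall fun u => by simp [h0]
    simp [hmin.fderiv_eq_zero]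
  · have : Nontrivial F := ⟨⟨f x, 0, h0⟩⟩
    have hnorm : DifferentiableAt ℝ (‖·‖) (f x) :=
      (contDiffAt_norm ℝ h0).differentiableAt one_ne_zero
    calc ‖fderiv ℝ (fun u => ‖f u‖) x‖ = ‖(fderiv ℝ (‖·‖) (f x)).comp (fderiv ℝ f x)‖ := by
          rw [← fderiv_comp x hnorm hf]; rfl
      _ ≤ ‖fderiv ℝ (‖·‖) (f x)‖ * ‖fderiv ℝ f x‖ := ContinuousLinearMap.opNorm_comp_le _ _
      _ = ‖fderiv ℝ f x‖ := by rw [norm_fderiv_norm hnorm, one_mul]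

section Hessian

variable {E : Type*} [NormedAddCommGroup E] [InnerProductSpace ℝ E] [CompleteSpace E]
  {f : E → ℝ} {x : E}

lemma IsSymmSndFDerivAt.isSymmetric_fderiv_gradient (hf : IsSymmSndFDerivAt ℝ f x) :
    (fderiv ℝ (gradient f) x : E →ₗ[ℝ] E).IsSymmetric := by
  have hD : ∀ a b, ⟪fderiv ℝ (gradient f) x a, b⟫ = fderiv ℝ (fderiv ℝ f) x a b := by
    intro a b
    rw [show gradient f = (InnerProductSpace.toDual ℝ E).symm ∘ fderiv ℝ f from rfl,
      LinearIsometryEquiv.comp_fderiv, ContinuousLinearMap.comp_apply]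
    exact InnerProductSpace.toDual_symm_apply
  intro a b
  change ⟪fderiv ℝ (gradient f) x a, b⟫ = ⟪a, fderiv ℝ (gradient f) x b⟫
  rw [hD, real_inner_comm, hD]
  exact hf a b

lemma ContDiffAt.differentiableAt_gradient (hf : ContDiffAt ℝ 2 f x) :
    DifferentiableAt ℝ (gradient f) x :=
  ((InnerProductSpace.toDual ℝ E).symm.contDiff.contDiffAt.comp x
    (hf.fderiv_right (m := 1) le_rfl)).differentiableAt one_ne_zero

end Hessian

theorem psf_norm_le_rho_mul_trace_hessian_general
    {E : Type*} [NormedAddCommGroup E] [InnerProductSpace ℝ E] [FiniteDimensional ℝ E]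
    (ρ : ℝ) (hρ : 0 < ρ) (L : E → ℝ) (hL : ContDiff ℝ 2 L) (w : E)
    (hpsd : ∀ v : E, 0 ≤ ⟪(fderiv ℝ (gradient L) w) v, v⟫) :
    ‖gradient (fun u => ρ * ‖gradient L u‖) w‖ ≤
      ρ * LinearMap.trace ℝ E (fderiv ℝ (gradient L) w : E →ₗ[ℝ] E) := by
  have hsymm : IsSymmSndFDerivAt ℝ L w :=
    hL.contDiffAt.isSymmSndFDerivAt (by simp [minSmoothness_of_isRCLikeNormedField])
  have hpos : (fderiv ℝ (gradient L) w).IsPositive :=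
    ⟨hsymm.isSymmetric_fderiv_gradient, hpsd⟩
  calc ‖gradient (fun u => ρ * ‖gradient L u‖) w‖
      = ρ * ‖fderiv ℝ (fun u => ‖gradient L u‖) w‖ := by
        rw [norm_gradient_const_mul, Real.norm_of_nonneg hρ.le]
    _ ≤ ρ * ‖fderiv ℝ (gradient L) w‖ := by
        gcongr
        exact norm_fderiv_norm_comp_le hL.contDiffAt.differentiableAt_gradient
    _ ≤ ρ * LinearMap.trace ℝ E (fderiv ℝ (gradient L) w : E →ₗ[ℝ] E) := by
        gcongr
        exact hpos.norm_le_re_trace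

/-- **Theorem 1 (ARSAM paper), inner-product-space form.**
The norm of the gradient of the penalty term `ρ‖∇L(w)‖` (the PSF of SAM) is bounded by
`ρ` times the trace of the Hessian `∇²L(w)`, assumed positive semidefinite. -/
theorem psf_norm_le_rho_mul_trace_hessian
    {E : Type*} [NormedAddCommGroup E] [InnerProductSpace ℝ E] [FiniteDimensional ℝ E]
    (ρ : ℝ) (hρ : 0 < ρ) (L : E → ℝ) (hL : ContDiff ℝ 2 L) (w : E)
    (hw : gradient L w ≠ 0)
    (hpsd : ∀ v : E, 0 ≤ ⟪(fderiv ℝ (gradient L) w) v, v⟫) :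
    ‖gradient (fun u => ρ * ‖gradient L u‖) w‖ ≤
      ρ * LinearMap.trace ℝ E (fderiv ℝ (gradient L) w : E →ₗ[ℝ] E) :=
  psf_norm_le_rho_mul_trace_hessian_general ρ hρ L hL w hpsd
end

section
/- Let E be a finite-dimensional real inner product space, ρ ≥ 0, and L : E → ℝ twice continuously differentiable. Fix w ∈ E with g := gradient L w ≠ 0. Then the function u ↦ L u + ρ * ‖gradient L u‖ is differentiable at w and its gradient at w equals g + (ρ / ‖g‖) • ((fderiv ℝ (gradient L) w) g); that is, the gradient of the SAM objective L(w) + ρ‖∇L(w)‖ decomposes as the SGD gradient ∇L(w) plus the PSF term ρ · ∇²L(w) ∇L(w) / ‖∇L(w)‖. -/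
/-!
Write `g = ∇L(w)` and `H = D(∇L)(w)`. Since `‖·‖` has gradient `‖g‖⁻¹ • g` away from `0`, the chain
rule gives `∇(‖∇L‖)(w) = H† (‖g‖⁻¹ • g)`. Because `L` is `C²`, its second derivative is symmetric,
which makes the Hessian `H` self-adjoint, so this is `‖g‖⁻¹ • H g`.
-/

open InnerProductSpace

section RCLike

variable {𝕜 E F : Type*} [RCLike 𝕜]
  [NormedAddCommGroup E] [InnerProductSpace 𝕜 E] [CompleteSpace E]
  [NormedAddCommGroup F] [InnerProductSpace 𝕜 F] [CompleteSpace F]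

theorem HasGradientAt.add {f g : E → 𝕜} {f' g' x : E} (hf : HasGradientAt f f' x)
    (hg : HasGradientAt g g' x) : HasGradientAt (fun y => f y + g y) (f' + g') x := by
  rw [hasGradientAt_iff_hasFDerivAt, map_add]
  exact hf.hasFDerivAt.add hg.hasFDerivAt

theorem HasGradientAt.comp_hasFDerivAt {f : F → 𝕜} {f' : F} {G : E → F} {G' : E →L[𝕜] F}
    {x : E} (hf : HasGradientAt f f' (G x)) (hG : HasFDerivAt G G' x) :
    HasGradientAt (fun y => f (G y)) (G'.adjoint f') x := by
  have hdual : toDual 𝕜 E (G'.adjoint f') = (toDual 𝕜 F f').comp G' := by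
    ext v
    exact ContinuousLinearMap.adjoint_inner_left G' v f'
  rw [hasGradientAt_iff_hasFDerivAt, hdual]
  exact hf.hasFDerivAt.comp x hG

end RCLike

section Real

variable {E : Type*} [NormedAddCommGroup E] [InnerProductSpace ℝ E] [CompleteSpace E]

theorem HasGradientAt.const_mul {f : E → ℝ} {f' x : E} (hf : HasGradientAt f f' x) (c : ℝ) :
    HasGradientAt (fun y => c * f y) (c • f') x := by
  rw [hasGradientAt_iff_hasFDerivAt, map_smul]
  exact hf.hasFDerivAt.const_mul c

theorem hasGradientAt_norm {x : E} (hx : x ≠ 0) : HasGradientAt (‖·‖) (‖x‖⁻¹ • x) x := by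
  have hsqrt := (hasStrictFDerivAt_norm_sq x).hasFDerivAt.sqrt (by positivity)
  simp only [Real.sqrt_sq (norm_nonneg _)] at hsqrt
  have hx' : ‖x‖ ≠ 0 := norm_ne_zero_iff.mpr hx
  have hdual : (1 / (2 * ‖x‖)) • 2 • innerSL ℝ x = toDual ℝ E (‖x‖⁻¹ • x) := by
    ext v
    simp
    field_simp
  rwa [hdual] at hsqrt

theorem ContDiff.gradient {f : E → ℝ} {m n : WithTop ℕ∞} (hf : ContDiff ℝ n f)
    (hmn : m + 1 ≤ n) : ContDiff ℝ m (gradient f) :=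
  (toDual ℝ E).symm.contDiff.comp (hf.fderiv_right hmn)

theorem inner_fderiv_gradient_apply (f : E → ℝ) (x u v : E) :
    ⟪fderiv ℝ (gradient f) x u, v⟫_ℝ = fderiv ℝ (fderiv ℝ f) x u v := by
  have hgrad : gradient f = (toDual ℝ E).symm ∘ fderiv ℝ f := rfl
  rw [hgrad, LinearIsometryEquiv.comp_fderiv]
  exact toDual_symm_apply

theorem isSelfAdjoint_fderiv_gradient {f : E → ℝ} {x : E} (hf : IsSymmSndFDerivAt ℝ f x) :
    IsSelfAdjoint (fderiv ℝ (gradient f) x) := by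
  rw [ContinuousLinearMap.isSelfAdjoint_iff_isSymmetric]
  intro u v
  simp only [ContinuousLinearMap.coe_coe]
  rw [real_inner_comm _ u, inner_fderiv_gradient_apply, inner_fderiv_gradient_apply, hf.eq]

end Real

theorem gradient_sam_decomposition_general
    {E : Type*} [NormedAddCommGroup E] [InnerProductSpace ℝ E] [FiniteDimensional ℝ E]
    (ρ : ℝ) (L : E → ℝ) (hL : ContDiff ℝ 2 L) (w : E)
    (hg : gradient L w ≠ 0) :
    DifferentiableAt ℝ (fun u => L u + ρ * ‖gradient L u‖) w ∧
      gradient (fun u => L u + ρ * ‖gradient L u‖) w =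
        gradient L w +
          (ρ / ‖gradient L w‖) • ((fderiv ℝ (gradient L) w) (gradient L w)) := by
  have hHessian : IsSelfAdjoint (fderiv ℝ (gradient L) w) :=
    isSelfAdjoint_fderiv_gradient (hL.contDiffAt.isSymmSndFDerivAt (by simp))
  have hgrad : HasFDerivAt (gradient L) (fderiv ℝ (gradient L) w) w :=
    ((hL.gradient (by norm_num)).differentiable one_ne_zero w).hasFDerivAt
  have hnorm := (hasGradientAt_norm hg).comp_hasFDerivAt hgrad
  rw [hHessian.adjoint_eq, map_smul] at hnorm
  have hsam := (hL.differentiable (by norm_num) w).hasGradientAt.add (hnorm.const_mul ρ)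
  refine ⟨hsam.differentiableAt, hsam.gradient.trans ?_⟩
  rw [smul_smul, div_eq_mul_inv]

/-- **Gradient decomposition of SAM (Eqs. (6)–(7) of the ARSAM paper).**
For a `C²` loss `L` with nonvanishing gradient at `w`, the SAM objective
`u ↦ L u + ρ‖∇L(u)‖` is differentiable at `w` and its gradient there decomposes as the
SGD gradient `∇L(w)` plus the PSF term `ρ · ∇²L(w) ∇L(w) / ‖∇L(w)‖`. -/
theorem gradient_sam_decomposition
    {E : Type*} [NormedAddCommGroup E] [InnerProductSpace ℝ E] [FiniteDimensional ℝ E]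
    (ρ : ℝ) (hρ : 0 ≤ ρ) (L : E → ℝ) (hL : ContDiff ℝ 2 L) (w : E)
    (hg : gradient L w ≠ 0) :
    DifferentiableAt ℝ (fun u => L u + ρ * ‖gradient L u‖) w ∧
      gradient (fun u => L u + ρ * ‖gradient L u‖) w =
        gradient L w +
          (ρ / ‖gradient L w‖) • ((fderiv ℝ (gradient L) w) (gradient L w)) :=
  gradient_sam_decomposition_general ρ L hL w hg
end

section
/- Let E be a finite-dimensional real inner product space, let H : E →L[ℝ] E be a self-adjoint positive semidefinite continuous linear map, and let g : E → E be a map with g u ≠ 0 and ‖g u‖ ≤ G for all u ∈ E, such that the normalized map ν : E → E, ν u := (1/‖g u‖) • g u, is Lipschitz with constant τ. Let η ≥ 0 and let w : ℕ → E be iterates satisfying w (k+1) = w k - η • g (w k) for all k. Then for all t and n, ‖H (ν (w (t+n))) - H (ν (w t))‖ ≤ n · η · τ · (trace H) · G. -/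
open RealInnerProductSpace

/-! A positive operator has its eigenvalues in `[0, tr H]`, so `‖H z‖ ≤ tr H · ‖z‖`. Applied to
`z = ν (w (t + n)) - ν (w t)`, the Lipschitz bound on `ν` reduces the claim to the displacement
of the iterates, and each gradient step moves them by at most `η G`. -/

theorem LinearMap.IsPositive.norm_apply_le_trace_mul {E : Type*} [NormedAddCommGroup E]
    [InnerProductSpace ℝ E] [FiniteDimensional ℝ E] {T : E →ₗ[ℝ] E} (hT : T.IsPositive)
    (z : E) : ‖T z‖ ≤ T.trace ℝ E * ‖z‖ := by
  have hn : Module.finrank ℝ E = Module.finrank ℝ E := rfl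
  set b := hT.isSymmetric.eigenvectorBasis hn
  set μ := hT.isSymmetric.eigenvalues hn
  have hμ : ∀ i, 0 ≤ μ i := hT.nonneg_eigenvalues hn
  have hμ_le : ∀ i, μ i ≤ T.trace ℝ E := fun i => by
    rw [hT.isSymmetric.trace_eq_sum_eigenvalues hn]
    exact Finset.single_le_sum (fun j _ => hμ j) (Finset.mem_univ i)
  refine (sq_le_sq₀ (norm_nonneg _) (mul_nonneg hT.trace_nonneg (norm_nonneg _))).mp ?_
  rw [← b.repr.norm_map, ← b.repr.norm_map z, mul_pow, EuclideanSpace.norm_sq_eq,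
    EuclideanSpace.norm_sq_eq, Finset.mul_sum]
  gcongr with i
  rw [hT.isSymmetric.eigenvectorBasis_apply_self_apply hn, norm_mul, mul_pow]
  gcongr
  rw [RCLike.norm_ofReal]
  exact (abs_of_nonneg (hμ i)).trans_le (hμ_le i)

theorem nonneg_of_forall_norm_sub_le_mul {E F : Type*} [NormedAddCommGroup E] [Nontrivial E]
    [SeminormedAddCommGroup F] {f : E → F} {τ : ℝ} (hf : ∀ u v, ‖f u - f v‖ ≤ τ * ‖u - v‖) :
    0 ≤ τ := by
  obtain ⟨u, hu⟩ := exists_ne (0 : E)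
  exact nonneg_of_mul_nonneg_left ((norm_nonneg _).trans (hf u 0))
    (norm_pos_iff.mpr (sub_ne_zero.mpr hu))

theorem norm_sub_le_mul_of_norm_succ_sub_le {E : Type*} [SeminormedAddCommGroup E]
    {w : ℕ → E} {C : ℝ} (hw : ∀ k, ‖w (k + 1) - w k‖ ≤ C) (t n : ℕ) :
    ‖w (t + n) - w t‖ ≤ n * C := by
  rw [← dist_eq_norm, dist_comm]
  calc dist (w t) (w (t + n)) ≤ ∑ _ ∈ Finset.Ico t (t + n), C :=
        dist_le_Ico_sum_of_dist_le (Nat.le_add_right t n) fun _ _ => by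
          rw [dist_comm, dist_eq_norm]; exact hw _
    _ = n * C := by simp

theorem psf_reuse_error_bound_general
    {E : Type*} [NormedAddCommGroup E] [InnerProductSpace ℝ E] [FiniteDimensional ℝ E]
    (H : E →L[ℝ] E) (hsa : ∀ x y : E, ⟪H x, y⟫ = ⟪x, H y⟫)
    (hpsd : ∀ x : E, 0 ≤ ⟪H x, x⟫)
    (g : E → E) (G : ℝ) (hg0 : ∀ u : E, g u ≠ 0) (hgG : ∀ u : E, ‖g u‖ ≤ G)
    (ν : E → E)
    (τ : ℝ) (hlip : ∀ u v : E, ‖ν u - ν v‖ ≤ τ * ‖u - v‖)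
    (η : ℝ) (hη : 0 ≤ η)
    (w : ℕ → E) (hw : ∀ k : ℕ, w (k + 1) = w k - η • g (w k)) :
    ∀ t n : ℕ, ‖H (ν (w (t + n))) - H (ν (w t))‖ ≤
      n * η * τ * LinearMap.trace ℝ E (H : E →ₗ[ℝ] E) * G := by
  intro t n
  have hH : (H : E →ₗ[ℝ] E).IsPositive := ⟨hsa, hpsd⟩
  have : Nontrivial E := ⟨⟨g 0, 0, hg0 0⟩⟩
  have hτ : 0 ≤ τ := nonneg_of_forall_norm_sub_le_mul hlip
  have hstep : ∀ k, ‖w (k + 1) - w k‖ ≤ η * G := fun k => by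
    rw [hw, sub_sub_cancel_left, norm_neg, norm_smul, Real.norm_of_nonneg hη]
    exact mul_le_mul_of_nonneg_left (hgG _) hη
  calc ‖H (ν (w (t + n))) - H (ν (w t))‖
      = ‖(H : E →ₗ[ℝ] E) (ν (w (t + n)) - ν (w t))‖ := by rw [H.coe_coe, map_sub]
    _ ≤ LinearMap.trace ℝ E H * (τ * ‖w (t + n) - w t‖) :=
        (hH.norm_apply_le_trace_mul _).trans
          (mul_le_mul_of_nonneg_left (hlip _ _) hH.trace_nonneg)
    _ ≤ LinearMap.trace ℝ E H * (τ * (n * (η * G))) := by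
        gcongr
        · exact hH.trace_nonneg
        · exact norm_sub_le_mul_of_norm_succ_sub_le hstep t n
    _ = n * η * τ * LinearMap.trace ℝ E (H : E →ₗ[ℝ] E) * G := by ring

/-- **Theorem 3 (ARSAM paper), deterministic core: PSF reuse error bound.**
Let `H` be a self-adjoint positive semidefinite continuous linear map (the Hessian),
`g` a nonvanishing gradient field with `‖g u‖ ≤ G`, whose normalization
`ν u = g u / ‖g u‖` is `τ`-Lipschitz, and let `w` be gradient-descent iterates with step
size `η`. Then the error between the PSF at iteration `t + n` and the PSF reused from
iteration `t` is bounded by `n · η · τ · (trace H) · G`. -/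
theorem psf_reuse_error_bound
    {E : Type*} [NormedAddCommGroup E] [InnerProductSpace ℝ E] [FiniteDimensional ℝ E]
    (H : E →L[ℝ] E) (hsa : ∀ x y : E, ⟪H x, y⟫ = ⟪x, H y⟫)
    (hpsd : ∀ x : E, 0 ≤ ⟪H x, x⟫)
    (g : E → E) (G : ℝ) (hg0 : ∀ u : E, g u ≠ 0) (hgG : ∀ u : E, ‖g u‖ ≤ G)
    (ν : E → E) (hν : ∀ u : E, ν u = (1 / ‖g u‖) • g u)
    (τ : ℝ) (hlip : ∀ u v : E, ‖ν u - ν v‖ ≤ τ * ‖u - v‖)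
    (η : ℝ) (hη : 0 ≤ η)
    (w : ℕ → E) (hw : ∀ k : ℕ, w (k + 1) = w k - η • g (w k)) :
    ∀ t n : ℕ, ‖H (ν (w (t + n))) - H (ν (w t))‖ ≤
      n * η * τ * LinearMap.trace ℝ E (H : E →ₗ[ℝ] E) * G :=
  psf_reuse_error_bound_general H hsa hpsd g G hg0 hgG ν τ hlip η hη w hw
end
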